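/- arXiv:1910.00670 — 2 statements merged into one kernel-verified Lean document; each statement's English description precedes it below -/
import Mathlib

section
/- Let T be a tubing of a finite connected simple graph Γ, let t ∈ T, let S be a tubing of (Γ_t)_{T|_t}^*, and let s be a proper tube of S. Let s̃ := s ∪ (the union of the maximal proper tubes of T|_t linked in Γ_t to s), which is a tube of the tubing γ_t(T;S). Then the graphs (((Γ_t)_{T|_t}^*)_s)_{S|_s}^* and (Γ_{s̃})_{γ_t(T;S)|_{s̃}}^* are equal: they have the same vertex set and the same edges. -/
open scoped Classical
open TensorProduct

noncomputable section

/-- A finite simple graph whose vertices are a finite set of (totally ordered) naturals. -/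
structure FinGraph : Type where
  verts : Finset ℕ
  Adj : ℕ → ℕ → Prop
  symm : ∀ v w, Adj v w → Adj w v
  loopless : ∀ v, ¬ Adj v v
  support : ∀ v w, Adj v w → v ∈ verts ∧ w ∈ verts

namespace CDTub

/-- Connectivity of a vertex set within a graph: any two of its vertices are joined by a
walk staying inside the set. -/
def VConn (G : FinGraph) (s : Finset ℕ) : Prop :=
  ∀ v ∈ s, ∀ w ∈ s, Relation.ReflTransGen (fun a b => a ∈ s ∧ b ∈ s ∧ G.Adj a b) v w

/-- A tube: a nonempty set of vertices inducing a connected subgraph. -/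
def IsTube (G : FinGraph) (t : Finset ℕ) : Prop :=
  t.Nonempty ∧ t ⊆ G.verts ∧ VConn G t

/-- A connected (nonempty) graph: the universal tube is a tube. -/
def IsConnGraph (G : FinGraph) : Prop := IsTube G G.verts

/-- Two vertex sets are far apart: disjoint and with no edge between them. -/
def FarApart (G : FinGraph) (a b : Finset ℕ) : Prop :=
  Disjoint a b ∧ ¬ ∃ v ∈ a, ∃ w ∈ b, G.Adj v w

/-- Compatible tubes: nested or far apart. -/
def Compatible (G : FinGraph) (a b : Finset ℕ) : Prop :=
  a ⊆ b ∨ b ⊆ a ∨ FarApart G a b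

/-- Linked tubes: disjoint and joined by an edge. -/
def Linked (G : FinGraph) (a b : Finset ℕ) : Prop :=
  Disjoint a b ∧ ∃ v ∈ a, ∃ w ∈ b, G.Adj v w

/-- A tubing of a connected graph: pairwise compatible tubes containing the universal tube. -/
def IsTubing (G : FinGraph) (T : Finset (Finset ℕ)) : Prop :=
  G.verts ∈ T ∧ (∀ t ∈ T, IsTube G t) ∧
    ∀ t ∈ T, ∀ t' ∈ T, t ≠ t' → Compatible G t t'

/-- Induced subgraph on a set of vertices. -/
def induce (G : FinGraph) (t : Finset ℕ) : FinGraph where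
  verts := t
  Adj v w := v ∈ t ∧ w ∈ t ∧ G.Adj v w
  symm := fun v w h => ⟨h.2.1, h.1, G.symm v w h.2.2⟩
  loopless := fun v h => G.loopless v h.2.2
  support := fun _ _ h => ⟨h.1, h.2.1⟩

/-- Simultaneous reconnected complement with respect to a family `F` of tubes
(for a single tube, or a family of pairwise far apart tubes, this is the (iterated)
reconnected complement). -/
def reconnAll (G : FinGraph) (F : Finset (Finset ℕ)) : FinGraph where
  verts := G.verts \ F.biUnion id
  Adj v w := v ≠ w ∧ v ∈ G.verts \ F.biUnion id ∧ w ∈ G.verts \ F.biUnion id ∧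
    (G.Adj v w ∨ ∃ f ∈ F, (∃ u ∈ f, G.Adj v u) ∧ ∃ u' ∈ f, G.Adj w u')
  symm := by
    rintro v w ⟨hne, hv, hw, h⟩
    refine ⟨hne.symm, hw, hv, ?_⟩
    rcases h with h | ⟨f, hf, h1, h2⟩
    · exact Or.inl (G.symm _ _ h)
    · exact Or.inr ⟨f, hf, h2, h1⟩
  loopless := fun v h => h.1 rfl
  support := fun _ _ h => ⟨h.2.1, h.2.2.1⟩

/-- Reconnected complement `Γ_t^*` of a graph with respect to a tube. -/
def reconn (G : FinGraph) (t : Finset ℕ) : FinGraph := reconnAll G {t}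

/-- The proper tubes of a tubing. -/
def properTubes (G : FinGraph) (T : Finset (Finset ℕ)) : Finset (Finset ℕ) :=
  T.filter (fun s => s ≠ G.verts)

/-- The maximal proper tubes of a tubing. -/
def MaxtP (G : FinGraph) (T : Finset (Finset ℕ)) : Finset (Finset ℕ) :=
  (properTubes G T).filter (fun s => ∀ s' ∈ properTubes G T, s ⊆ s' → s = s')

/-- The iterated reconnected complement `Γ_T^*` with respect to the maximal proper tubes. -/
def gammaStar (G : FinGraph) (T : Finset (Finset ℕ)) : FinGraph :=
  reconnAll G (MaxtP G T)

/-- Restriction `T|_t` of a tubing to a tube. -/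
def restrictT (T : Finset (Finset ℕ)) (t : Finset ℕ) : Finset (Finset ℕ) :=
  T.filter (fun s => s ⊆ t)

/-- For a tube `s` of `Γ_T^*`, the tube `s̃` of `Γ`: the union of `s` with all maximal
proper tubes of `T` linked to `s`. -/
def tildeT (G : FinGraph) (T : Finset (Finset ℕ)) (s : Finset ℕ) : Finset ℕ :=
  s ∪ ((MaxtP G T).filter (fun m => Linked G m s)).biUnion id

/-- Substitution `T •_Γ S` of a tubing `S` of `Γ_T^*` into the tubing `T`. -/
def substT (G : FinGraph) (T S : Finset (Finset ℕ)) : Finset (Finset ℕ) :=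
  T ∪ S.image (tildeT G T)

/-- The `t`-substitution `γ_t(T;S) = T ∪ (T|_t •_{Γ_t} S)`. -/
def gammaSub (G : FinGraph) (T : Finset (Finset ℕ)) (t : Finset ℕ)
    (S : Finset (Finset ℕ)) : Finset (Finset ℕ) :=
  T ∪ substT (induce G t) (restrictT T t) S

/-- The tubing `T_t^*` induced on the reconnected complement `Γ_t^*`. -/
def indStar (T : Finset (Finset ℕ)) (t : Finset ℕ) : Finset (Finset ℕ) :=
  T.filter (fun s => Disjoint s t) ∪ (T.filter (fun s => t ⊂ s)).image (fun s => s \ t)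

/-- The operation `T ◇ S` of Definition 2.4(2). -/
def diamond (G : FinGraph) (T : Finset (Finset ℕ)) (t : Finset ℕ)
    (S : Finset (Finset ℕ)) : Finset (Finset ℕ) :=
  T ∪ S.filter (fun s => ¬ Linked G s t) ∪
    (S.filter (fun s => Linked G s t)).image (fun s => s ∪ t)

/-- The tubes of `T`, viewed as subsets of the subtype of vertices. -/
def tubeSets (G : FinGraph) (T : Finset (Finset ℕ)) : Set (Set {x // x ∈ G.verts}) :=
  {U | ∃ t ∈ T, U = {x : {x // x ∈ G.verts} | (x : ℕ) ∈ t}}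

/-- The topology on the vertex set generated by the tubes of `T`. -/
def tubingTop (G : FinGraph) (T : Finset (Finset ℕ)) :
    TopologicalSpace {x // x ∈ G.verts} :=
  TopologicalSpace.generateFrom (tubeSets G T)

/-- One-line notation of the permutation `σ_t`: the vertices of `t` in increasing order
followed by the remaining vertices in increasing order. -/
def sigmaList (X t : Finset ℕ) : List ℕ :=
  t.sort (· ≤ ·) ++ (X \ t).sort (· ≤ ·)

/-- Number of `Γ`-inversions of a permutation given by its one-line notation `l`:
pairs of positions `p < q` carrying values `a > b` which form an edge of `Γ`. -/
def invCount (G : FinGraph) (l : List ℕ) : ℕ :=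
  ((Finset.range l.length ×ˢ Finset.range l.length).filter
    (fun pq => pq.1 < pq.2 ∧ l.getD pq.2 0 < l.getD pq.1 0 ∧
      G.Adj (l.getD pq.1 0) (l.getD pq.2 0))).card

/-- The signature `sgn^Γ(σ) = (-1)^{inv_Γ(σ)}`. -/
def graphSgn (G : FinGraph) (l : List ℕ) : ℤ := (-1) ^ invCount G l

/-- Rank (1-based) of `v` inside a finite set `X` of naturals: the order-preserving
relabelling of `X` by `{1,…,|X|}`. -/
def rk (X : Finset ℕ) (v : ℕ) : ℕ := (X.filter (fun u => u ≤ v)).card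

/-- Order-preserving relabelling of a graph by the initial segment `{1,…,n}`. -/
def relabelG (G : FinGraph) : FinGraph where
  verts := G.verts.image (rk G.verts)
  Adj i j := i ≠ j ∧ ∃ v w, G.Adj v w ∧ i = rk G.verts v ∧ j = rk G.verts w
  symm := by
    rintro i j ⟨hne, v, w, h, hi, hj⟩
    exact ⟨hne.symm, w, v, G.symm _ _ h, hj, hi⟩
  loopless := fun _ h => h.1 rfl
  support := by
    rintro i j ⟨hne, v, w, h, hi, hj⟩
    exact ⟨Finset.mem_image.mpr ⟨v, (G.support _ _ h).1, hi.symm⟩,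
      Finset.mem_image.mpr ⟨w, (G.support _ _ h).2, hj.symm⟩⟩

/-- Order-preserving relabelling of a subset of `X`. -/
def relabelF (X t : Finset ℕ) : Finset ℕ := t.image (rk X)

/-- Order-preserving relabelling of a family of subsets of `X`. -/
def relabelT (X : Finset ℕ) (T : Finset (Finset ℕ)) : Finset (Finset ℕ) :=
  T.image (relabelF X)

/-- Connected components (in `G`) of a set of vertices. -/
def comps (G : FinGraph) (s : Finset ℕ) : Finset (Finset ℕ) :=
  s.image (fun v => s.filter (fun w =>
    Relation.ReflTransGen (fun a b => a ∈ s ∧ b ∈ s ∧ G.Adj a b) v w))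

/-- The restriction map `res_Ω^Γ` on tubings: replace each tube by its connected
components in `Ω`. -/
def resT (Om : FinGraph) (T : Finset (Finset ℕ)) : Finset (Finset ℕ) :=
  T.biUnion (comps Om)

/-- Shift of a vertex set by `n`. -/
def shiftF (n : ℕ) (s : Finset ℕ) : Finset ℕ := s.image (fun v => v + n)

/-- Shift of a family of vertex sets by `n`. -/
def shiftT (n : ℕ) (S : Finset (Finset ℕ)) : Finset (Finset ℕ) := S.image (shiftF n)

/-- Shift of a graph by `n`. -/
def shiftG (n : ℕ) (G : FinGraph) : FinGraph where
  verts := shiftF n G.verts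
  Adj v w := ∃ a b, G.Adj a b ∧ v = a + n ∧ w = b + n
  symm := by
    rintro v w ⟨a, b, h, rfl, rfl⟩
    exact ⟨b, a, G.symm _ _ h, rfl, rfl⟩
  loopless := by
    rintro v ⟨a, b, h, ha, hb⟩
    have : a = b := by omega
    exact G.loopless b (this ▸ h)
  support := by
    rintro v w ⟨a, b, h, rfl, rfl⟩
    exact ⟨Finset.mem_image.mpr ⟨a, (G.support _ _ h).1, rfl⟩,
      Finset.mem_image.mpr ⟨b, (G.support _ _ h).2, rfl⟩⟩

/-- `X_T` : the vertices belonging to no proper tube of `T`. -/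
def freeVerts (G : FinGraph) (T : Finset (Finset ℕ)) : Finset ℕ :=
  G.verts.filter (fun v => ∀ s ∈ T, s ≠ G.verts → v ∉ s)

/-- The endpoint `max X_T` of the joining edge. -/
def joinA (G : FinGraph) (T : Finset (Finset ℕ)) : ℕ :=
  WithBot.unbotD 0 (freeVerts G T).max

/-- The endpoint `n + min X_S` of the joining edge. -/
def joinB (Om : FinGraph) (S : Finset (Finset ℕ)) (n : ℕ) : ℕ :=
  n + WithTop.untopD 0 (freeVerts Om S).min

/-- Vertex set of the joined graph `Γ ∪_{T,S} Ω`. -/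
def joinVerts (G Om : FinGraph) (n : ℕ) : Finset ℕ := G.verts ∪ shiftF n Om.verts

/-- The joined graph `Γ ∪_{T,S} Ω`: the disjoint union (with `Ω` shifted by `n`)
plus one edge from `max X_T` to `n + min X_S`. -/
def joinG (G Om : FinGraph) (T S : Finset (Finset ℕ)) (n : ℕ) : FinGraph where
  verts := joinVerts G Om n
  Adj v w := G.Adj v w ∨ (shiftG n Om).Adj v w ∨
    (v ≠ w ∧ v ∈ joinVerts G Om n ∧ w ∈ joinVerts G Om n ∧
      ((v = joinA G T ∧ w = joinB Om S n) ∨ (w = joinA G T ∧ v = joinB Om S n)))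
  symm := by
    rintro v w (h | h | ⟨hne, hv, hw, hc⟩)
    · exact Or.inl (G.symm _ _ h)
    · exact Or.inr (Or.inl ((shiftG n Om).symm _ _ h))
    · exact Or.inr (Or.inr ⟨hne.symm, hw, hv, hc.symm⟩)
  loopless := by
    rintro v (h | h | ⟨hne, _⟩)
    · exact G.loopless v h
    · exact (shiftG n Om).loopless v h
    · exact hne rfl
  support := by
    rintro v w (h | h | ⟨_, hv, hw, _⟩)
    · exact ⟨Finset.mem_union_left _ (G.support _ _ h).1,
        Finset.mem_union_left _ (G.support _ _ h).2⟩
    · exact ⟨Finset.mem_union_right _ ((shiftG n Om).support _ _ h).1,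
        Finset.mem_union_right _ ((shiftG n Om).support _ _ h).2⟩
    · exact ⟨hv, hw⟩

/-- `T ▷ S`. -/
def trR (G Om : FinGraph) (T S : Finset (Finset ℕ)) (n : ℕ) : Finset (Finset ℕ) :=
  T ∪ shiftT n (properTubes Om S) ∪ {joinVerts G Om n}

/-- `T ◁ S`. -/
def trL (G Om : FinGraph) (T S : Finset (Finset ℕ)) (n : ℕ) : Finset (Finset ℕ) :=
  properTubes G T ∪ shiftT n S ∪ {joinVerts G Om n}

/-- `T ⊥ S`. -/
def tPerp (G Om : FinGraph) (T S : Finset (Finset ℕ)) (n : ℕ) : Finset (Finset ℕ) :=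
  properTubes G T ∪ shiftT n (properTubes Om S) ∪ {joinVerts G Om n}

/-- Equality of graphs: same vertex set and same edges. -/
def GEq (A B : FinGraph) : Prop :=
  A.verts = B.verts ∧ ∀ v w, A.Adj v w ↔ B.Adj v w

/-- Index type for the basis of `Tub⁺`: `none` is the unit `1`, `some (Γ,T)` is a pair. -/
abbrev TubIdx : Type := Option (FinGraph × Finset (Finset ℕ))

/-- A pair `(Γ,T)` relabelled order-preservingly to standard vertex set, identified
with the unit `1` when the vertex set is empty. -/
def embPair (G : FinGraph) (T : Finset (Finset ℕ)) : TubIdx :=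
  if G.verts = ∅ then none else some (relabelG G, relabelT G.verts T)

/-- The value of the pre-Lie coproduct `Δ_•` on a basis element. -/
def deltaFun (K : Type) [CommRing K] (i : TubIdx) :
    (TubIdx →₀ K) ⊗[K] (TubIdx →₀ K) :=
  match i with
  | none => Finsupp.single (none : TubIdx) (1 : K) ⊗ₜ[K] Finsupp.single (none : TubIdx) (1 : K)
  | some (G, T) =>
      (∑ t ∈ T, (Finsupp.single (embPair (induce G t) (restrictT T t)) (1 : K)) ⊗ₜ[K]
        (Finsupp.single (embPair (reconn G t) (indStar T t)) (1 : K)))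
      + (Finsupp.single (none : TubIdx) (1 : K)) ⊗ₜ[K]
          (Finsupp.single (some (G, T) : TubIdx) (1 : K))

/-- The pre-Lie coproduct `Δ_•` on `Tub⁺`, the free module on `TubIdx`. -/
def delta (K : Type) [CommRing K] :
    (TubIdx →₀ K) →ₗ[K] (TubIdx →₀ K) ⊗[K] (TubIdx →₀ K) :=
  Finsupp.lift ((TubIdx →₀ K) ⊗[K] (TubIdx →₀ K)) K TubIdx (deltaFun K)

end CDTub

/-! The reconnected complement `reconnAll G F` only depends on `F` up to mutual cofinality, so
`Γ_T^*` may be computed from all proper tubes of `T` rather than the maximal ones. Up to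
cofinality, the proper tubes of `γ_t(T;S)|_{s̃}` are the maximal tubes `m` of `T|_t` linked to
`s` and the tubes `b̃` for `b` a proper tube of `S|_s`. Reconnecting `Γ_{s̃}` through `m`
restores exactly the edges that `(Γ_t)_{T|_t}^*` gained through `m`, and a vertex of `s` is
adjacent in `Γ` to `b̃` exactly when it is adjacent to `b` in `(Γ_t)_{T|_t}^*`. -/

theorem FinGraph.ext {A B : FinGraph} (hv : A.verts = B.verts)
    (ha : ∀ v w, A.Adj v w ↔ B.Adj v w) : A = B := by
  obtain ⟨VA, AA, _, _, _⟩ := A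
  obtain ⟨VB, AB, _, _, _⟩ := B
  obtain rfl : VA = VB := hv
  obtain rfl : AA = AB := funext fun v => funext fun w => propext (ha v w)
  rfl

namespace CDTub

open Finset

variable {G H : FinGraph} {F F' M U S : Finset (Finset ℕ)} {s t b r m m' : Finset ℕ}
  {v w x : ℕ}

theorem induce_induce_of_subset (h : s ⊆ t) : induce (induce G t) s = induce G s :=
  FinGraph.ext rfl fun _ _ =>
    ⟨fun ⟨hv, hw, _, _, hadj⟩ => ⟨hv, hw, hadj⟩,
      fun ⟨hv, hw, hadj⟩ => ⟨hv, hw, h hv, h hw, hadj⟩⟩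

theorem reconnAll_adj : (reconnAll G F).Adj v w ↔ v ≠ w ∧ v ∈ (reconnAll G F).verts ∧
    w ∈ (reconnAll G F).verts ∧
    (G.Adj v w ∨ ∃ f ∈ F, (∃ u ∈ f, G.Adj v u) ∧ ∃ u' ∈ f, G.Adj w u') :=
  Iff.rfl

theorem biUnion_subset_of_cofinal (h : ∀ f ∈ F, ∃ f' ∈ F', f ⊆ f') :
    F.biUnion id ⊆ F'.biUnion id :=
  biUnion_subset.2 fun f hf =>
    let ⟨_, hf', hff'⟩ := h f hf
    hff'.trans (subset_biUnion_of_mem id hf')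

theorem exists_adj_adj_of_cofinal (h : ∀ f ∈ F, ∃ f' ∈ F', f ⊆ f')
    (hvw : ∃ f ∈ F, (∃ u ∈ f, G.Adj v u) ∧ ∃ u' ∈ f, G.Adj w u') :
    ∃ f ∈ F', (∃ u ∈ f, G.Adj v u) ∧ ∃ u' ∈ f, G.Adj w u' := by
  obtain ⟨f, hf, ⟨u, hu, hvu⟩, u', hu', hwu'⟩ := hvw
  obtain ⟨f', hf', hff'⟩ := h f hf
  exact ⟨f', hf', ⟨u, hff' hu, hvu⟩, u', hff' hu', hwu'⟩

theorem reconnAll_eq_of_cofinal (h : ∀ f ∈ F, ∃ f' ∈ F', f ⊆ f')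
    (h' : ∀ f' ∈ F', ∃ f ∈ F, f' ⊆ f) : reconnAll G F = reconnAll G F' := by
  have hverts : (reconnAll G F).verts = (reconnAll G F').verts := by
    simp only [reconnAll,
      (biUnion_subset_of_cofinal h).antisymm (biUnion_subset_of_cofinal h')]
  refine FinGraph.ext hverts fun v w => ?_
  rw [reconnAll_adj, reconnAll_adj, hverts]
  exact and_congr_right' <| and_congr_right' <| and_congr_right' <|
    or_congr_right ⟨exists_adj_adj_of_cofinal h, exists_adj_adj_of_cofinal h'⟩

theorem mem_restrictT : r ∈ restrictT U t ↔ r ∈ U ∧ r ⊆ t := mem_filter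

theorem mem_properTubes : r ∈ properTubes H U ↔ r ∈ U ∧ r ≠ H.verts := mem_filter

theorem mem_of_mem_MaxtP (hm : m ∈ MaxtP H U) : m ∈ U :=
  (mem_filter.1 (mem_filter.1 hm).1).1

theorem exists_mem_MaxtP_superset (hr : r ∈ properTubes H U) :
    ∃ m ∈ MaxtP H U, r ⊆ m := by
  obtain ⟨m, hrm, hmax⟩ := (properTubes H U).exists_le_maximal hr
  exact ⟨m, mem_filter.2 ⟨hmax.1, fun _ hr' hmr' => le_antisymm hmr' (hmax.2 hr' hmr')⟩,
    hrm⟩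

theorem gammaStar_eq_reconnAll_properTubes : gammaStar H U = reconnAll H (properTubes H U) :=
  reconnAll_eq_of_cofinal (fun m hm => ⟨m, (mem_filter.1 hm).1, subset_rfl⟩)
    fun _ hr => exists_mem_MaxtP_superset hr

def IsLaminar (U : Finset (Finset ℕ)) : Prop :=
  ∀ r ∈ U, ∀ r' ∈ U, r ⊆ r' ∨ r' ⊆ r ∨ Disjoint r r'

theorem IsLaminar.mono (hU : IsLaminar U) (hVU : F ⊆ U) : IsLaminar F :=
  fun r hr r' hr' => hU r (hVU hr) r' (hVU hr')

theorem IsTubing.isLaminar {T : Finset (Finset ℕ)} (hT : IsTubing G T) : IsLaminar T := by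
  intro r hr r' hr'
  by_cases h : r = r'
  · exact Or.inl h.le
  · rcases hT.2.2 r hr r' hr' h with h | h | h
    exacts [Or.inl h, Or.inr (Or.inl h), Or.inr (Or.inr h.1)]

theorem eq_or_disjoint_of_mem_MaxtP
    (hU : IsLaminar U)
    (hm : m ∈ MaxtP H U) (hm' : m' ∈ MaxtP H U) : m = m' ∨ Disjoint m m' := by
  rcases hU m (mem_of_mem_MaxtP hm) m' (mem_of_mem_MaxtP hm') with h | h | h
  · exact Or.inl ((mem_filter.1 hm).2 m' (mem_filter.1 hm').1 h)
  · exact Or.inl ((mem_filter.1 hm').2 m (mem_filter.1 hm).1 h).symm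
  · exact Or.inr h

/-- `tildeT H U` is `linkedHull H (MaxtP H U)` by definition. -/
def linkedHull (H : FinGraph) (M : Finset (Finset ℕ)) (s : Finset ℕ) : Finset ℕ :=
  s ∪ (M.filter (fun m => Linked H m s)).biUnion id

theorem mem_linkedHull :
    x ∈ linkedHull H M s ↔ x ∈ s ∨ ∃ m ∈ M, Linked H m s ∧ x ∈ m := by
  simp only [linkedHull, mem_union, mem_biUnion, mem_filter, id, and_assoc]

theorem subset_linkedHull : s ⊆ linkedHull H M s := subset_union_left

theorem subset_linkedHull_of_linked (hm : m ∈ M) (hl : Linked H m s) :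
    m ⊆ linkedHull H M s :=
  fun _ hx => mem_linkedHull.2 (Or.inr ⟨m, hm, hl, hx⟩)

theorem linkedHull_subset_verts (hM : ∀ m ∈ M, m ⊆ H.verts) (hs : s ⊆ H.verts) :
    linkedHull H M s ⊆ H.verts :=
  union_subset hs (biUnion_subset.2 fun m hm => hM m (mem_filter.1 hm).1)

theorem notMem_reconnAll_verts (hm : m ∈ M) (hx : x ∈ m) : x ∉ (reconnAll H M).verts :=
  fun h => (mem_sdiff.1 h).2 (mem_biUnion.2 ⟨m, hm, hx⟩)

theorem linked_iff_of_subset_reconnAll_verts (hm : m ∈ M) (hs : s ⊆ (reconnAll H M).verts) :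
    Linked H m s ↔ ∃ p ∈ m, ∃ q ∈ s, H.Adj p q :=
  ⟨And.right, fun h =>
    ⟨disjoint_left.2 fun _ hx hxs => notMem_reconnAll_verts hm hx (hs hxs), h⟩⟩

theorem mem_of_mem_linkedHull (hx : x ∈ linkedHull H M s)
    (hxK : x ∈ (reconnAll H M).verts) : x ∈ s := by
  rcases mem_linkedHull.1 hx with h | ⟨m, hm, -, hxm⟩
  · exact h
  · exact absurd hxK (notMem_reconnAll_verts hm hxm)

theorem linkedHull_mono (hs : s ⊆ (reconnAll H M).verts) (hbs : b ⊆ s) :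
    linkedHull H M b ⊆ linkedHull H M s := by
  intro x hx
  rcases mem_linkedHull.1 hx with h | ⟨m, hm, ⟨-, p, hp, q, hq, hpq⟩, hxm⟩
  · exact subset_linkedHull (hbs h)
  · exact subset_linkedHull_of_linked hm
      ((linked_iff_of_subset_reconnAll_verts hm hs).2 ⟨p, hp, q, hbs hq, hpq⟩) hxm

theorem eq_of_linkedHull_eq (hb : b ⊆ (reconnAll H M).verts) (hs : s ⊆ (reconnAll H M).verts)
    (h : linkedHull H M b = linkedHull H M s) : b = s :=
  Subset.antisymm (fun _ hx => mem_of_mem_linkedHull (h ▸ subset_linkedHull hx) (hb hx))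
    fun _ hx => mem_of_mem_linkedHull (h ▸ subset_linkedHull hx) (hs hx)

theorem exists_adj_induce_reconnAll_iff (hs : s ⊆ (reconnAll H M).verts) (hbs : b ⊆ s)
    (hv : v ∈ s) (hvb : v ∉ b) :
    (∃ u ∈ b, (induce (reconnAll H M) s).Adj v u) ↔
      ∃ u ∈ linkedHull H M b, (induce H (linkedHull H M s)).Adj v u := by
  constructor
  · rintro ⟨u, hub, -, -, -, -, -, h | ⟨m, hm, ⟨p, hpm, hvp⟩, q, hqm, huq⟩⟩
    · exact ⟨u, subset_linkedHull hub, subset_linkedHull hv, subset_linkedHull (hbs hub), h⟩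
    · have hl : Linked H m b := (linked_iff_of_subset_reconnAll_verts hm (hbs.trans hs)).2
        ⟨q, hqm, u, hub, H.symm _ _ huq⟩
      have hpb := subset_linkedHull_of_linked hm hl hpm
      exact ⟨p, hpb, subset_linkedHull hv, linkedHull_mono hs hbs hpb, hvp⟩
  · rintro ⟨u, hu, -, -, hvu⟩
    rcases mem_linkedHull.1 hu with hub | ⟨m, hm, ⟨-, p, hpm, z, hzb, hpz⟩, hum⟩
    · exact ⟨u, hub, hv, hbs hub, fun h => hvb (h ▸ hub), hs hv, hs (hbs hub), Or.inl hvu⟩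
    · exact ⟨z, hzb, hv, hbs hzb, fun h => hvb (h ▸ hzb), hs hv, hs (hbs hzb),
        Or.inr ⟨m, hm, ⟨u, hum, hvu⟩, p, hpm, H.symm _ _ hpz⟩⟩

theorem reconnAll_induce_reconnAll_verts {B : Finset (Finset ℕ)}
    (hs : s ⊆ (reconnAll H M).verts) :
    (reconnAll (induce (reconnAll H M) s) B).verts =
      (reconnAll (induce H (linkedHull H M s))
        (M.filter (fun m => Linked H m s) ∪ B.image (linkedHull H M))).verts := by
  ext x
  simp only [reconnAll, induce, mem_sdiff, mem_biUnion, mem_union, mem_filter, mem_image, id]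
  constructor
  · rintro ⟨hxs, hxB⟩
    refine ⟨subset_linkedHull hxs, ?_⟩
    rintro ⟨_, ⟨hm, -⟩ | ⟨b, hb, rfl⟩, hxf⟩
    · exact notMem_reconnAll_verts hm hxf (hs hxs)
    · exact hxB ⟨b, hb, mem_of_mem_linkedHull hxf (hs hxs)⟩
  · rintro ⟨hx, hxF⟩
    rcases mem_linkedHull.1 hx with hxs | ⟨m, hm, hl, hxm⟩
    · exact ⟨hxs, fun ⟨b, hb, hxb⟩ =>
        hxF ⟨_, Or.inr ⟨b, hb, rfl⟩, subset_linkedHull hxb⟩⟩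
    · exact absurd ⟨m, Or.inl ⟨hm, hl⟩, hxm⟩ hxF

theorem exists_linked_adj_adj_iff (hs : s ⊆ (reconnAll H M).verts) (hv : v ∈ s)
    (hw : w ∈ s) :
    (∃ m ∈ M, (∃ p ∈ m, H.Adj v p) ∧ ∃ q ∈ m, H.Adj w q) ↔
      ∃ m ∈ M.filter (fun m => Linked H m s),
        (∃ u ∈ m, (induce H (linkedHull H M s)).Adj v u) ∧
          ∃ u' ∈ m, (induce H (linkedHull H M s)).Adj w u' := by
  constructor
  · rintro ⟨m, hm, ⟨p, hp, hvp⟩, q, hq, hwq⟩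
    have hl := (linked_iff_of_subset_reconnAll_verts hm hs).2 ⟨p, hp, v, hv, H.symm _ _ hvp⟩
    have hmsub := subset_linkedHull_of_linked hm hl
    exact ⟨m, mem_filter.2 ⟨hm, hl⟩, ⟨p, hp, subset_linkedHull hv, hmsub hp, hvp⟩,
      q, hq, subset_linkedHull hw, hmsub hq, hwq⟩
  · rintro ⟨m, hm, ⟨p, hp, -, -, hvp⟩, q, hq, -, -, hwq⟩
    exact ⟨m, (mem_filter.1 hm).1, ⟨p, hp, hvp⟩, q, hq, hwq⟩

theorem reconnAll_induce_reconnAll_adj_iff {B : Finset (Finset ℕ)}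
    (hs : s ⊆ (reconnAll H M).verts) (hB : ∀ b ∈ B, b ⊆ s)
    (hv : v ∈ (reconnAll (induce (reconnAll H M) s) B).verts)
    (hw : w ∈ (reconnAll (induce (reconnAll H M) s) B).verts) (hvw : v ≠ w) :
    ((induce (reconnAll H M) s).Adj v w ∨ ∃ b ∈ B,
        (∃ u ∈ b, (induce (reconnAll H M) s).Adj v u) ∧
          ∃ u' ∈ b, (induce (reconnAll H M) s).Adj w u') ↔
      ((induce H (linkedHull H M s)).Adj v w ∨
        ∃ f ∈ M.filter (fun m => Linked H m s) ∪ B.image (linkedHull H M),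
          (∃ u ∈ f, (induce H (linkedHull H M s)).Adj v u) ∧
            ∃ u' ∈ f, (induce H (linkedHull H M s)).Adj w u') := by
  obtain ⟨hvs, hvB⟩ := mem_sdiff.1 hv
  obtain ⟨hws, hwB⟩ := mem_sdiff.1 hw
  have hvb : ∀ b ∈ B, v ∉ b := fun b hb hvb => hvB (mem_biUnion.2 ⟨b, hb, hvb⟩)
  have hwb : ∀ b ∈ B, w ∉ b := fun b hb hwb => hwB (mem_biUnion.2 ⟨b, hb, hwb⟩)
  have hvia := exists_linked_adj_adj_iff (H := H) hs hvs hws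
  have hhull : (∃ b ∈ B, (∃ u ∈ b, (induce (reconnAll H M) s).Adj v u) ∧
        ∃ u' ∈ b, (induce (reconnAll H M) s).Adj w u') ↔
      ∃ f ∈ B.image (linkedHull H M), (∃ u ∈ f, (induce H (linkedHull H M s)).Adj v u) ∧
        ∃ u' ∈ f, (induce H (linkedHull H M s)).Adj w u' := by
    rw [exists_mem_image]
    refine exists_congr fun b => and_congr_right fun hb => and_congr ?_ ?_
    exacts [exists_adj_induce_reconnAll_iff hs (hB b hb) hvs (hvb b hb),
      exists_adj_induce_reconnAll_iff hs (hB b hb) hws (hwb b hb)]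
  have hleft : (induce (reconnAll H M) s).Adj v w ↔
      H.Adj v w ∨ ∃ m ∈ M, (∃ p ∈ m, H.Adj v p) ∧ ∃ q ∈ m, H.Adj w q :=
    ⟨fun h => h.2.2.2.2.2, fun h => ⟨hvs, hws, hvw, hs hvs, hs hws, h⟩⟩
  have hright : (induce H (linkedHull H M s)).Adj v w ↔ H.Adj v w :=
    ⟨fun h => h.2.2, fun h => ⟨subset_linkedHull hvs, subset_linkedHull hws, h⟩⟩
  simp only [hleft, hright, hvia, hhull, mem_union, or_and_right, exists_or, or_assoc]

theorem reconnAll_induce_reconnAll {B : Finset (Finset ℕ)}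
    (hs : s ⊆ (reconnAll H M).verts) (hB : ∀ b ∈ B, b ⊆ s) :
    reconnAll (induce (reconnAll H M) s) B =
      reconnAll (induce H (linkedHull H M s))
        (M.filter (fun m => Linked H m s) ∪ B.image (linkedHull H M)) := by
  have hverts := reconnAll_induce_reconnAll_verts (B := B) hs
  refine FinGraph.ext hverts fun v w => ?_
  rw [reconnAll_adj, reconnAll_adj, ← hverts]
  exact and_congr_right fun hvw => and_congr_right fun hv => and_congr_right fun hw =>
    reconnAll_induce_reconnAll_adj_iff hs hB hv hw hvw

theorem exists_linked_MaxtP_superset (hUsub : ∀ r ∈ U, r ⊆ H.verts)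
    (hUne : ∀ r ∈ U, r.Nonempty) (hU : IsLaminar U)
    (hs : s ⊆ (gammaStar H U).verts) (hr : r ∈ U) (hrs : r ⊆ tildeT H U s)
    (hne : r ≠ tildeT H U s) : ∃ m ∈ MaxtP H U, Linked H m s ∧ r ⊆ m := by
  have hrH : r ≠ H.verts := by
    rintro rfl
    exact hne (hrs.antisymm (linkedHull_subset_verts
      (fun m hm => hUsub m (mem_of_mem_MaxtP hm)) (hs.trans sdiff_subset)))
  obtain ⟨m, hm, hrm⟩ := exists_mem_MaxtP_superset (mem_filter.2 ⟨hr, hrH⟩)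
  obtain ⟨x, hx⟩ := hUne r hr
  rcases mem_linkedHull.1 (hrs hx) with hxs | ⟨m', hm', hl, hxm'⟩
  · exact absurd (hs hxs) (notMem_reconnAll_verts hm (hrm hx))
  · rcases eq_or_disjoint_of_mem_MaxtP hU hm hm' with rfl | hdisj
    · exact ⟨m, hm, hl, hrm⟩
    · exact absurd hxm' (disjoint_left.1 hdisj (hrm hx))

theorem reconnAll_properTubes_restrictT_substT (hUsub : ∀ r ∈ U, r ⊆ H.verts)
    (hUne : ∀ r ∈ U, r.Nonempty) (hU : IsLaminar U)
    (hS : ∀ b ∈ S, b ⊆ (gammaStar H U).verts) (hs : s ⊆ (gammaStar H U).verts) :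
    reconnAll G (properTubes (induce H (tildeT H U s))
        (restrictT (substT H U S) (tildeT H U s))) =
      reconnAll G ((MaxtP H U).filter (fun m => Linked H m s) ∪
        (properTubes (induce (gammaStar H U) s) (restrictT S s)).image (tildeT H U)) := by
  apply reconnAll_eq_of_cofinal
  · intro r hr
    obtain ⟨hrR, hrne⟩ := mem_properTubes.1 hr
    obtain ⟨hrsub, hrs⟩ := mem_restrictT.1 hrR
    rcases mem_union.1 hrsub with hrU | hrS
    · obtain ⟨m, hm, hl, hrm⟩ :=
        exists_linked_MaxtP_superset hUsub hUne hU hs hrU hrs hrne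
      exact ⟨m, mem_union_left _ (mem_filter.2 ⟨hm, hl⟩), hrm⟩
    · obtain ⟨b, hb, rfl⟩ := mem_image.1 hrS
      have hbs : b ⊆ s := fun _ hx =>
        mem_of_mem_linkedHull (hrs (subset_linkedHull hx)) (hS b hb hx)
      have hbP : b ∈ properTubes (induce (gammaStar H U) s) (restrictT S s) :=
        mem_properTubes.2 ⟨mem_restrictT.2 ⟨hb, hbs⟩, fun h => hrne (congrArg _ h)⟩
      exact ⟨_, mem_union_right _ (mem_image_of_mem _ hbP), subset_rfl⟩
  · intro f hf
    rcases mem_union.1 hf with hf | hf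
    · obtain ⟨hm, hl⟩ := mem_filter.1 hf
      obtain ⟨-, -, -, q, hq, -⟩ := id hl
      have hfs : f ≠ tildeT H U s := fun h =>
        notMem_reconnAll_verts hm (h ▸ subset_linkedHull hq) (hs hq)
      exact ⟨f, mem_properTubes.2 ⟨mem_restrictT.2 ⟨mem_union_left _ (mem_of_mem_MaxtP hm),
        subset_linkedHull_of_linked hm hl⟩, hfs⟩, subset_rfl⟩
    · obtain ⟨b, hb, rfl⟩ := mem_image.1 hf
      obtain ⟨hbR, hbne⟩ := mem_properTubes.1 hb
      obtain ⟨hbS, hbs⟩ := mem_restrictT.1 hbR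
      have hne : tildeT H U b ≠ tildeT H U s := fun h =>
        hbne (eq_of_linkedHull_eq (hbs.trans hs) hs h)
      exact ⟨_, mem_properTubes.2 ⟨mem_restrictT.2
        ⟨mem_union_right _ (mem_image_of_mem _ hbS), linkedHull_mono hs hbs⟩, hne⟩,
        subset_rfl⟩

theorem restrictT_gammaSub_of_subset {T : Finset (Finset ℕ)} (h : s ⊆ t) :
    restrictT (gammaSub G T t S) s = restrictT (substT (induce G t) (restrictT T t) S) s := by
  ext r
  simp only [gammaSub, mem_restrictT, mem_union]
  constructor
  · rintro ⟨hrT | hr, hrs⟩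
    · exact ⟨mem_union_left _ (mem_restrictT.2 ⟨hrT, hrs.trans h⟩), hrs⟩
    · exact ⟨hr, hrs⟩
  · exact fun ⟨hr, hrs⟩ => ⟨Or.inr hr, hrs⟩

end CDTub

open CDTub in
theorem assoc_graphs_eq_general (G : FinGraph)
    (T : Finset (Finset ℕ)) (hT : IsTubing G T) (t : Finset ℕ)
    (S : Finset (Finset ℕ))
    (hS : IsTubing (gammaStar (induce G t) (restrictT T t)) S)
    (s : Finset ℕ) (hs : s ∈ S) :
    (gammaStar (induce (gammaStar (induce G t) (restrictT T t)) s) (restrictT S s)).verts =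
      (gammaStar (induce G (tildeT (induce G t) (restrictT T t) s))
        (restrictT (gammaSub G T t S) (tildeT (induce G t) (restrictT T t) s))).verts ∧
    ∀ v w,
      (gammaStar (induce (gammaStar (induce G t) (restrictT T t)) s)
          (restrictT S s)).Adj v w ↔
      (gammaStar (induce G (tildeT (induce G t) (restrictT T t) s))
          (restrictT (gammaSub G T t S) (tildeT (induce G t) (restrictT T t) s))).Adj v w := by
  set Γt := induce G t
  set Tt := restrictT T t
  set K := gammaStar Γt Tt
  set st := tildeT Γt Tt s
  have hTt_sub : ∀ r ∈ Tt, r ⊆ Γt.verts := fun r hr => (mem_restrictT.1 hr).2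
  have hTt_ne : ∀ r ∈ Tt, r.Nonempty := fun r hr => (hT.2.1 r (mem_restrictT.1 hr).1).1
  have hTt : IsLaminar Tt := hT.isLaminar.mono (Finset.filter_subset _ _)
  have hSK : ∀ b ∈ S, b ⊆ K.verts := fun b hb => (hS.2.1 b hb).2.1
  have hst : st ⊆ t := linkedHull_subset_verts
    (fun m hm => hTt_sub m (mem_of_mem_MaxtP hm)) ((hSK s hs).trans Finset.sdiff_subset)
  have key : gammaStar (induce K s) (restrictT S s) =
      gammaStar (induce G st) (restrictT (gammaSub G T t S) st) := calc
    _ = reconnAll (induce K s) (properTubes (induce K s) (restrictT S s)) :=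
      gammaStar_eq_reconnAll_properTubes
    _ = reconnAll (induce Γt st) ((MaxtP Γt Tt).filter (fun m => Linked Γt m s) ∪
          (properTubes (induce K s) (restrictT S s)).image (tildeT Γt Tt)) :=
      reconnAll_induce_reconnAll (hSK s hs)
        fun b hb => (mem_restrictT.1 (mem_properTubes.1 hb).1).2
    _ = reconnAll (induce Γt st)
          (properTubes (induce Γt st) (restrictT (substT Γt Tt S) st)) :=
      (reconnAll_properTubes_restrictT_substT hTt_sub hTt_ne hTt hSK (hSK s hs)).symm
    _ = _ := by
      rw [induce_induce_of_subset hst, restrictT_gammaSub_of_subset hst,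
        gammaStar_eq_reconnAll_properTubes]
  exact ⟨congrArg FinGraph.verts key, fun v w => by rw [key]⟩

open CDTub in
/-- The graphs `(((Γ_t)_{T|_t}^*)_s)_{S|_s}^*` and `(Γ_{s̃})_{γ_t(T;S)|_{s̃}}^*` are
equal: same vertex set and same edges. -/
theorem assoc_graphs_eq (G : FinGraph) (hc : IsConnGraph G)
    (T : Finset (Finset ℕ)) (hT : IsTubing G T) (t : Finset ℕ) (ht : t ∈ T)
    (S : Finset (Finset ℕ))
    (hS : IsTubing (gammaStar (induce G t) (restrictT T t)) S)
    (s : Finset ℕ) (hs : s ∈ S)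
    (hsp : s ≠ (gammaStar (induce G t) (restrictT T t)).verts) :
    (gammaStar (induce (gammaStar (induce G t) (restrictT T t)) s) (restrictT S s)).verts =
      (gammaStar (induce G (tildeT (induce G t) (restrictT T t) s))
        (restrictT (gammaSub G T t S) (tildeT (induce G t) (restrictT T t) s))).verts ∧
    ∀ v w,
      (gammaStar (induce (gammaStar (induce G t) (restrictT T t)) s)
          (restrictT S s)).Adj v w ↔
      (gammaStar (induce G (tildeT (induce G t) (restrictT T t) s))
          (restrictT (gammaSub G T t S) (tildeT (induce G t) (restrictT T t) s))).Adj v w :=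
  assoc_graphs_eq_general G T hT t S hS s hs
end
end

section
/- For any finite connected simple graph Γ, every tubing T of Γ may be obtained from the universal tubing T_Γ = {t_Γ} by iterated substitutions that add one tube at a time: there exist k ≥ 0 and a sequence of tubings T_0 = {t_Γ}, T_1, …, T_k = T of Γ such that for each 1 ≤ i ≤ k, T_i = γ_{t_Γ}(T_{i−1}; S_i) = T_{i−1} •_Γ S_i, where S_i is a tubing of the iterated reconnected complement Γ_{T_{i−1}}^* having exactly one proper tube. -/
open scoped Classical
open TensorProduct

noncomputable section

/-!
Induct on the number of tubes. Removing a maximal proper tube `t` from `T` leaves a tubing `T'`,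
reachable by induction. Let `U` be the union of the maximal proper tubes of `T'`; each of them is
either inside `t`, and then linked to `t \ U` because `t` is connected, or far apart from `t`.
Hence the tubing `{t \ U, Γ \ U}` of `Γ_{T'}^*` has the single proper tube `t \ U`, whose
tube `(t \ U)~` is `t` again, so substituting it into `T'` gives `T`.
-/

theorem Relation.ReflTransGen.exists_seq {α : Type*} {r : α → α → Prop} {a b : α}
    (h : Relation.ReflTransGen r a b) :
    ∃ (k : ℕ) (f : ℕ → α), f 0 = a ∧ f k = b ∧ ∀ i < k, r (f i) (f (i + 1)) := by
  induction h with
  | refl => exact ⟨0, fun _ => a, rfl, rfl, fun i hi => absurd hi (Nat.not_lt_zero i)⟩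
  | @tail b c _ hbc ih =>
    obtain ⟨k, f, h0, hk, hf⟩ := ih
    refine ⟨k + 1, fun i => if i ≤ k then f i else c, by simpa using h0, by simp, ?_⟩
    intro i hi
    rcases (Nat.lt_succ_iff.mp hi).lt_or_eq with hi | rfl
    · simpa [hi.le, Nat.succ_le_of_lt hi] using hf i hi
    · simpa [hk] using hbc

namespace CDTub

variable {G : FinGraph}

theorem IsTubing.of_subset {T T' : Finset (Finset ℕ)} (hT : IsTubing G T) (hT' : T' ⊆ T)
    (hv : G.verts ∈ T') : IsTubing G T' :=
  ⟨hv, fun t ht => hT.2.1 t (hT' ht), fun t ht t' ht' => hT.2.2 t (hT' ht) t' (hT' ht')⟩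

section reconnAll

variable {F : Finset (Finset ℕ)} {f t : Finset ℕ}

theorem exists_adj_sdiff_biUnion_of_reflTransGen
    (hF : (F : Set (Finset ℕ)).Pairwise (FarApart G)) (hf : f ∈ F) {x y : ℕ}
    (hxy : Relation.ReflTransGen (fun a b => a ∈ t ∧ b ∈ t ∧ G.Adj a b) x y)
    (hx : x ∈ f) (hy : y ∉ f) : ∃ a ∈ f, ∃ b ∈ t \ F.biUnion id, G.Adj a b := by
  induction hxy using Relation.ReflTransGen.head_induction_on with
  | refl => exact absurd hx hy
  | @head a c hac _ ih =>
    obtain ⟨-, hct, hadj⟩ := hac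
    by_cases hcf : c ∈ f
    · exact ih hcf
    by_cases hcF : c ∈ F.biUnion id
    · obtain ⟨f', hf', hcf'⟩ := Finset.mem_biUnion.mp hcF
      exact absurd ⟨a, hx, c, hcf', hadj⟩ (hF hf hf' (fun h => hcf (h ▸ hcf'))).2
    · exact ⟨a, hx, c, Finset.mem_sdiff.mpr ⟨hct, hcF⟩, hadj⟩

theorem exists_adj_sdiff_biUnion_of_ssubset (hF : (F : Set (Finset ℕ)).Pairwise (FarApart G))
    (hf : f ∈ F) (hfne : f.Nonempty) (ht : VConn G t) (hft : f ⊂ t) :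
    ∃ a ∈ f, ∃ b ∈ t \ F.biUnion id, G.Adj a b := by
  obtain ⟨x, hx⟩ := hfne
  obtain ⟨y, hyt, hyf⟩ := Finset.exists_of_ssubset hft
  exact exists_adj_sdiff_biUnion_of_reflTransGen hF hf (ht x (hft.subset hx) y hyt) hx hyf

/-- A walk of `G` inside `t` between vertices outside `⋃ F` becomes a walk of the reconnected
complement once each excursion into a member of `F` is short-cut by a reconnecting edge. -/
theorem reflTransGen_reconnAll (hF : (F : Set (Finset ℕ)).Pairwise (FarApart G))
    (ht : t ⊆ G.verts) {v w : ℕ}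
    (hvw : Relation.ReflTransGen (fun a b => a ∈ t ∧ b ∈ t ∧ G.Adj a b) v w)
    (hv : v ∉ F.biUnion id) (hw : w ∉ F.biUnion id) :
    Relation.ReflTransGen (fun a b => a ∈ t \ F.biUnion id ∧ b ∈ t \ F.biUnion id ∧
      (reconnAll G F).Adj a b) v w := by
  set R := fun a b => a ∈ t \ F.biUnion id ∧ b ∈ t \ F.biUnion id ∧ (reconnAll G F).Adj a b
  have hmem : ∀ a ∈ t \ F.biUnion id, a ∈ G.verts \ F.biUnion id :=
    fun a ha => Finset.sdiff_subset_sdiff ht le_rfl ha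
  -- The second conjunct handles a walk that is currently inside a member `f` of `F`,
  -- entered from the vertex `b`.
  suffices key : (v ∉ F.biUnion id → Relation.ReflTransGen R v w) ∧
      ∀ f ∈ F, v ∈ f → ∀ b ∈ t \ F.biUnion id, (∃ u ∈ f, G.Adj b u) →
        Relation.ReflTransGen R b w from key.1 hv
  clear hv
  induction hvw using Relation.ReflTransGen.head_induction_on with
  | refl =>
    exact ⟨fun _ => .refl, fun f hf hwf => absurd (Finset.mem_biUnion.mpr ⟨f, hf, hwf⟩) hw⟩
  | @head a c hac _ ih =>
    obtain ⟨hat, hct, hadj⟩ := hac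
    by_cases hcF : c ∈ F.biUnion id
    · obtain ⟨f', hf', hcf'⟩ := Finset.mem_biUnion.mp hcF
      refine ⟨fun haF => ih.2 f' hf' hcf' a (Finset.mem_sdiff.mpr ⟨hat, haF⟩)
        ⟨c, hcf', hadj⟩, fun f hf haf b hb hbf => ?_⟩
      by_cases hff' : f = f'
      · exact ih.2 f hf (hff' ▸ hcf') b hb hbf
      · exact absurd ⟨a, haf, c, hcf', hadj⟩ (hF hf hf' hff').2
    · have hc : c ∈ t \ F.biUnion id := Finset.mem_sdiff.mpr ⟨hct, hcF⟩
      refine ⟨fun haF => ?_, fun f hf haf b hb hbf => ?_⟩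
      · have ha : a ∈ t \ F.biUnion id := Finset.mem_sdiff.mpr ⟨hat, haF⟩
        have hac : a ≠ c := fun h => G.loopless a (h ▸ hadj)
        exact .head ⟨ha, hc, hac, hmem a ha, hmem c hc, Or.inl hadj⟩ (ih.1 hcF)
      · by_cases hbc : b = c
        · exact hbc ▸ ih.1 hcF
        · exact .head ⟨hb, hc, hbc, hmem b hb, hmem c hc,
            Or.inr ⟨f, hf, hbf, a, haf, G.symm a c hadj⟩⟩ (ih.1 hcF)

theorem VConn.reconnAll_sdiff (hF : (F : Set (Finset ℕ)).Pairwise (FarApart G))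
    (hsub : t ⊆ G.verts) (ht : VConn G t) : VConn (reconnAll G F) (t \ F.biUnion id) := by
  intro v hv w hw
  rw [Finset.mem_sdiff] at hv hw
  exact reflTransGen_reconnAll hF hsub (ht v hv.1 w hw.1) hv.2 hw.2

theorem sdiff_biUnion_nonempty (hF : (F : Set (Finset ℕ)).Pairwise (FarApart G))
    (hFne : ∀ f ∈ F, f.Nonempty) (ht : IsTube G t)
    (hFt : ∀ f ∈ F, f ⊂ t ∨ FarApart G f t) : (t \ F.biUnion id).Nonempty := by
  obtain ⟨x, hx⟩ := ht.1
  by_cases hxF : x ∈ F.biUnion id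
  · obtain ⟨f, hf, hxf⟩ := Finset.mem_biUnion.mp hxF
    rcases hFt f hf with hft | hft
    · obtain ⟨-, -, b, hb, -⟩ :=
        exists_adj_sdiff_biUnion_of_ssubset hF hf (hFne f hf) ht.2.2 hft
      exact ⟨b, hb⟩
    · exact absurd hx (Finset.disjoint_left.mp hft.1 hxf)
  · exact ⟨x, Finset.mem_sdiff.mpr ⟨hx, hxF⟩⟩

end reconnAll

section MaxtP

variable {T : Finset (Finset ℕ)} {t : Finset ℕ}

theorem mem_properTubes_of_mem_MaxtP {f : Finset ℕ} (hf : f ∈ MaxtP G T) :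
    f ∈ properTubes G T :=
  (Finset.mem_filter.mp hf).1

theorem IsTubing.isTube_of_mem_MaxtP (hT : IsTubing G T) {f : Finset ℕ}
    (hf : f ∈ MaxtP G T) : IsTube G f :=
  hT.2.1 f (Finset.filter_subset _ _ (mem_properTubes_of_mem_MaxtP hf))

theorem pairwise_farApart_MaxtP (hT : IsTubing G T) :
    (MaxtP G T : Set (Finset ℕ)).Pairwise (FarApart G) := by
  intro f hf f' hf' hne
  have hfmax := (Finset.mem_filter.mp hf).2
  have hf'max := (Finset.mem_filter.mp hf').2
  have hfT := (Finset.mem_filter.mp (mem_properTubes_of_mem_MaxtP hf)).1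
  have hf'T := (Finset.mem_filter.mp (mem_properTubes_of_mem_MaxtP hf')).1
  rcases hT.2.2 f hfT f' hf'T hne with h | h | h
  · exact absurd (hfmax f' (mem_properTubes_of_mem_MaxtP hf') h) hne
  · exact absurd (hf'max f (mem_properTubes_of_mem_MaxtP hf) h).symm hne
  · exact h

theorem tildeT_sdiff_biUnion_MaxtP (hT : IsTubing G T) (ht : IsTube G t)
    (hTt : ∀ m ∈ properTubes G T, m ⊂ t ∨ FarApart G m t) :
    tildeT G T (t \ (MaxtP G T).biUnion id) = t := by
  set U := (MaxtP G T).biUnion id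
  have hlinked : ∀ f ∈ MaxtP G T, Linked G f (t \ U) ↔ f ⊂ t := by
    intro f hf
    constructor
    · rintro ⟨-, v, hv, w, hw, hvw⟩
      exact (hTt f (mem_properTubes_of_mem_MaxtP hf)).resolve_right
        fun hft => hft.2 ⟨v, hv, w, (Finset.mem_sdiff.mp hw).1, hvw⟩
    refine fun hft => ⟨?_, ?_⟩
    · exact Finset.disjoint_left.mpr fun x hxf hx =>
        (Finset.mem_sdiff.mp hx).2 (Finset.mem_biUnion.mpr ⟨f, hf, hxf⟩)
    · exact exists_adj_sdiff_biUnion_of_ssubset (pairwise_farApart_MaxtP hT) hf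
        (hT.isTube_of_mem_MaxtP hf).1 ht.2.2 hft
  rw [tildeT, Finset.filter_congr hlinked]
  ext x
  simp only [Finset.mem_union, Finset.mem_sdiff, Finset.mem_biUnion, Finset.mem_filter, id, U]
  refine ⟨fun h => h.elim And.left fun ⟨_, ⟨_, hft⟩, hxf⟩ => hft.subset hxf,
    fun hx => ?_⟩
  by_cases hxU : ∃ f ∈ MaxtP G T, x ∈ f
  · obtain ⟨f, hf, hxf⟩ := hxU
    refine Or.inr ⟨f, ⟨hf, ?_⟩, hxf⟩
    exact (hTt f (mem_properTubes_of_mem_MaxtP hf)).resolve_right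
      fun hft => Finset.disjoint_left.mp hft.1 hxf hx
  · exact Or.inl ⟨hx, hxU⟩

theorem isTube_gammaStar_sdiff_biUnion_MaxtP (hT : IsTubing G T) (ht : IsTube G t)
    (hTt : ∀ m ∈ properTubes G T, m ⊂ t ∨ FarApart G m t) :
    IsTube (gammaStar G T) (t \ (MaxtP G T).biUnion id) := by
  have hF := pairwise_farApart_MaxtP hT
  refine ⟨sdiff_biUnion_nonempty hF (fun f hf => (hT.isTube_of_mem_MaxtP hf).1) ht
    (fun f hf => hTt f (mem_properTubes_of_mem_MaxtP hf)),
    Finset.sdiff_subset_sdiff ht.2.1 le_rfl, ht.2.2.reconnAll_sdiff hF ht.2.1⟩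

end MaxtP

def IsSingleSubstitution (G : FinGraph) (T T' : Finset (Finset ℕ)) : Prop :=
  ∃ S : Finset (Finset ℕ), IsTubing (gammaStar G T) S ∧
    (S.filter (fun s => s ≠ (gammaStar G T).verts)).card = 1 ∧ T' = substT G T S

theorem ssubset_verts_of_mem_properTubes {T : Finset (Finset ℕ)} (hT : IsTubing G T)
    {m : Finset ℕ} (hm : m ∈ properTubes G T) : m ⊂ G.verts :=
  have hm := Finset.mem_filter.mp hm
  Finset.ssubset_iff_subset_ne.mpr ⟨(hT.2.1 m hm.1).2.1, hm.2⟩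

/-- The new tube `t` is obtained by substituting `S = {t \ ⋃ Maxt(T), Γ \ ⋃ Maxt(T)}`. -/
theorem isSingleSubstitution_insert {T : Finset (Finset ℕ)} {t : Finset ℕ} (hT : IsTubing G T)
    (ht : IsTube G t) (htv : t ≠ G.verts)
    (hTt : ∀ m ∈ properTubes G T, m ⊂ t ∨ FarApart G m t) :
    IsSingleSubstitution G T (insert t T) := by
  set U := (MaxtP G T).biUnion id
  have hTv : ∀ m ∈ properTubes G T, m ⊂ G.verts ∨ FarApart G m G.verts :=
    fun m hm => Or.inl (ssubset_verts_of_mem_properTubes hT hm)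
  have hv : IsTube G G.verts := hT.2.1 _ hT.1
  have hsv : t \ U ≠ G.verts \ U := fun h => htv <| by
    rw [← tildeT_sdiff_biUnion_MaxtP hT ht hTt, h, tildeT_sdiff_biUnion_MaxtP hT hv hTv]
  refine ⟨{t \ U, G.verts \ U}, ⟨by simp [gammaStar, reconnAll, U], ?_, ?_⟩, ?_, ?_⟩
  · simp only [Finset.mem_insert, Finset.mem_singleton]
    rintro s (rfl | rfl)
    exacts [isTube_gammaStar_sdiff_biUnion_MaxtP hT ht hTt,
      isTube_gammaStar_sdiff_biUnion_MaxtP hT hv hTv]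
  · have hsub : t \ U ⊆ G.verts \ U := Finset.sdiff_subset_sdiff ht.2.1 le_rfl
    simp only [Finset.mem_insert, Finset.mem_singleton]
    rintro s (rfl | rfl) s' (rfl | rfl) hne <;>
      first | exact absurd rfl hne | simp [Compatible, hsub]
  · rw [show (gammaStar G T).verts = G.verts \ U from rfl, Finset.filter_insert,
      Finset.filter_singleton]
    simp [hsv]
  · rw [substT, Finset.image_insert, Finset.image_singleton,
      tildeT_sdiff_biUnion_MaxtP hT ht hTt, tildeT_sdiff_biUnion_MaxtP hT hv hTv,
      Finset.union_insert, Finset.union_eq_left.mpr (Finset.singleton_subset_iff.mpr hT.1)]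

theorem ssubset_or_farApart_of_maximal {T : Finset (Finset ℕ)} {t : Finset ℕ}
    (hT : IsTubing G T) (ht : Maximal (· ∈ properTubes G T) t) :
    ∀ m ∈ properTubes G (T.erase t), m ⊂ t ∨ FarApart G m t := by
  intro m hm
  obtain ⟨hmt, hmT⟩ := Finset.mem_erase.mp (Finset.mem_filter.mp hm).1
  have hm' : m ∈ properTubes G T := Finset.mem_filter.mpr ⟨hmT, (Finset.mem_filter.mp hm).2⟩
  rcases hT.2.2 m hmT t (Finset.mem_filter.mp ht.1).1 hmt with h | h | h
  · exact Or.inl (Finset.ssubset_iff_subset_ne.mpr ⟨h, hmt⟩)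
  · exact absurd (le_antisymm (ht.2 hm' h) h) hmt
  · exact Or.inr h

theorem reflTransGen_isSingleSubstitution {T : Finset (Finset ℕ)} (hT : IsTubing G T) :
    Relation.ReflTransGen (fun A B => IsTubing G A ∧ IsSingleSubstitution G A B)
      {G.verts} T := by
  induction T using Finset.strongInduction with
  | H T ih =>
    obtain hP | ⟨t, ht⟩ := (properTubes G T).eq_empty_or_nonempty
    · have hTv : T = {G.verts} := Finset.eq_singleton_iff_unique_mem.mpr
        ⟨hT.1, fun s hs => by_contra fun hsv =>
          Finset.notMem_empty s (hP ▸ Finset.mem_filter.mpr ⟨hs, hsv⟩)⟩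
      exact hTv ▸ .refl
    obtain ⟨t, htmax⟩ := (properTubes G T).exists_maximal ⟨t, ht⟩
    obtain ⟨htT, htv⟩ := Finset.mem_filter.mp htmax.1
    have hT' : IsTubing G (T.erase t) :=
      hT.of_subset (Finset.erase_subset t T) (Finset.mem_erase.mpr ⟨Ne.symm htv, hT.1⟩)
    have hstep := isSingleSubstitution_insert hT' (hT.2.1 t htT) htv
      (ssubset_or_farApart_of_maximal hT htmax)
    rw [Finset.insert_erase htT] at hstep
    exact .tail (ih _ (Finset.erase_ssubset htT) hT') ⟨hT', hstep⟩

end CDTub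

open CDTub in
theorem tubing_generated_by_single_substitutions_general (G : FinGraph)
    (T : Finset (Finset ℕ)) (hT : IsTubing G T) :
    ∃ (k : ℕ) (f : ℕ → Finset (Finset ℕ)),
      f 0 = {G.verts} ∧ f k = T ∧ (∀ i ≤ k, IsTubing G (f i)) ∧
      ∀ i < k, ∃ S : Finset (Finset ℕ),
        IsTubing (gammaStar G (f i)) S ∧
        (S.filter (fun s => s ≠ (gammaStar G (f i)).verts)).card = 1 ∧
        f (i + 1) = substT G (f i) S := by
  obtain ⟨k, f, h0, hk, hstep⟩ := (reflTransGen_isSingleSubstitution hT).exists_seq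
  refine ⟨k, f, h0, hk, fun i hi => ?_, fun i hi => (hstep i hi).2⟩
  rcases hi.lt_or_eq with hi | rfl
  · exact (hstep i hi).1
  · exact hk ▸ hT

open CDTub in
/-- Every tubing of a connected graph is obtained from the universal tubing `{t_Γ}` by
iterated substitutions, each adding a single tube. -/
theorem tubing_generated_by_single_substitutions (G : FinGraph) (hc : IsConnGraph G)
    (T : Finset (Finset ℕ)) (hT : IsTubing G T) :
    ∃ (k : ℕ) (f : ℕ → Finset (Finset ℕ)),
      f 0 = {G.verts} ∧ f k = T ∧ (∀ i ≤ k, IsTubing G (f i)) ∧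
      ∀ i < k, ∃ S : Finset (Finset ℕ),
        IsTubing (gammaStar G (f i)) S ∧
        (S.filter (fun s => s ≠ (gammaStar G (f i)).verts)).card = 1 ∧
        f (i + 1) = substT G (f i) S :=
  tubing_generated_by_single_substitutions_general G T hT
end
end
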